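/- Let p be prime, C ⊂ 𝔽ₚⁿ a linear code of rank L, B an invertible real n×n matrix, Λ_c = Bℤⁿ, and Λ = B p⁻¹(g(C) + pℤⁿ) where g embeds 𝔽ₚ into ℤ componentwise. Then Λ is a lattice containing Λ_c, and the index of Λ_c in Λ equals p^L, i.e., |Λ/Λ_c| = p^L. -/

import Mathlib

/-!
Since `B` is invertible and `p ≠ 0`, the map `v ↦ B (p⁻¹ v)` is injective on `ℤⁿ`, so the index
of `Λc` in `Λ` equals the index of `pℤⁿ = g⁻¹(0)` in `g⁻¹(C)` inside `ℤⁿ`. Reduction modulo `p`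
is surjective, so this index is `|C| = p ^ dim C`.
-/

/-- The coordinatewise reduction `ℤⁿ → 𝔽ₚⁿ` as an additive group homomorphism. -/
def intCastHom (p n : ℕ) : (Fin n → ℤ) →+ (Fin n → ZMod p) where
  toFun v := fun i => ((v i : ℤ) : ZMod p)
  map_zero' := by funext i; simp
  map_add' v w := by funext i; simp

/-- The map `v ↦ B (p⁻¹ v)` from `ℤⁿ` into `ℝⁿ` as an additive group homomorphism. -/
noncomputable def scaledLatticeHom (p n : ℕ) (B : Matrix (Fin n) (Fin n) ℝ) :
    (Fin n → ℤ) →+ (Fin n → ℝ) where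
  toFun v := B.mulVec (fun i => (v i : ℝ) / p)
  map_zero' := by
    have h : (fun i : Fin n => ((0 : Fin n → ℤ) i : ℝ) / p) = (0 : Fin n → ℝ) := by
      funext i; simp
    show B.mulVec _ = 0
    rw [h, Matrix.mulVec_zero]
  map_add' v w := by
    have h : (fun i : Fin n => (((v + w) i : ℤ) : ℝ) / p) =
        (fun i : Fin n => ((v i : ℤ) : ℝ) / p) + (fun i : Fin n => ((w i : ℤ) : ℝ) / p) := by
      funext i
      simp [Pi.add_apply, add_div]
    show B.mulVec _ = B.mulVec _ + B.mulVec _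
    rw [h, Matrix.mulVec_add]

theorem scaledLatticeHom_injective {p n : ℕ} (hp : p ≠ 0) {B : Matrix (Fin n) (Fin n) ℝ}
    (hB : IsUnit B.det) : Function.Injective (scaledLatticeHom p n B) := by
  intro v w hvw
  have hBinj : Function.Injective B.mulVec :=
    Matrix.mulVec_injective_iff_isUnit.mpr ((Matrix.isUnit_iff_isUnit_det B).mpr hB)
  have hscaled : (fun i => (v i : ℝ) / p) = (fun i => (w i : ℝ) / p) := hBinj hvw
  have hp' : (p : ℝ) ≠ 0 := Nat.cast_ne_zero.mpr hp
  funext i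
  exact_mod_cast (div_left_inj' hp').mp (congrFun hscaled i)

theorem intCastHom_surjective (p n : ℕ) : Function.Surjective (intCastHom p n) :=
  fun c => ⟨fun i => (c i).cast, funext fun i => ZMod.intCast_zmod_cast (c i)⟩

theorem AddSubgroup.relIndex_comap_bot_of_surjective {G Q : Type*} [AddGroup G] [AddGroup Q]
    {f : G →+ Q} (hf : Function.Surjective f) (S : AddSubgroup Q) :
    ((⊥ : AddSubgroup Q).comap f).relIndex (S.comap f) = Nat.card S := by
  rw [relIndex_comap, map_comap_eq_self_of_surjective hf, relIndex_bot_left]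

theorem constructionA_index_general
    (p n L : ℕ) (hp : p.Prime)
    (B : Matrix (Fin n) (Fin n) ℝ) (hB : IsUnit B.det)
    (C : Submodule (ZMod p) (Fin n → ZMod p))
    (hC : Module.finrank (ZMod p) C = L)
    (Λ Λc : AddSubgroup (Fin n → ℝ))
    (hΛ : Λ = AddSubgroup.map (scaledLatticeHom p n B)
      (C.toAddSubgroup.comap (intCastHom p n)))
    (hΛc : Λc = AddSubgroup.map (scaledLatticeHom p n B)
      ((⊥ : AddSubgroup (Fin n → ZMod p)).comap (intCastHom p n))) :
    Λc ≤ Λ ∧ Nat.card (Λ ⧸ Λc.addSubgroupOf Λ) = p ^ L := by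
  subst hΛ hΛc
  have : Fact p.Prime := ⟨hp⟩
  refine ⟨AddSubgroup.map_mono (AddSubgroup.comap_mono bot_le), ?_⟩
  calc Nat.card (_ ⧸ _)
      = ((⊥ : AddSubgroup (Fin n → ZMod p)).comap (intCastHom p n)).relIndex
          (C.toAddSubgroup.comap (intCastHom p n)) :=
        AddSubgroup.relIndex_map_map_of_injective _ _ (scaledLatticeHom_injective hp.ne_zero hB)
    _ = Nat.card C :=
        AddSubgroup.relIndex_comap_bot_of_surjective (intCastHom_surjective p n) _
    _ = p ^ L := by rw [Module.natCard_eq_pow_finrank (K := ZMod p), Nat.card_zmod, hC]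

/-- Construction A nesting and index: for a prime `p`, a linear code `C ⊆ 𝔽ₚⁿ` of rank
`L`, and an invertible real matrix `B`, the set `Λ = B p⁻¹ (g(C) + pℤⁿ)` (realized as
the image under `v ↦ B(p⁻¹ v)` of the preimage of `C` in `ℤⁿ`, which equals
`g(C) + pℤⁿ`) is a lattice (an additive subgroup) containing `Λc = Bℤⁿ`, and the index
of `Λc` in `Λ` is `p^L`, i.e. `|Λ/Λc| = p^L`. -/
theorem constructionA_index
    (p n L : ℕ) (hp : p.Prime) (hL : L ≤ n)
    (B : Matrix (Fin n) (Fin n) ℝ) (hB : IsUnit B.det)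
    (C : Submodule (ZMod p) (Fin n → ZMod p))
    (hC : Module.finrank (ZMod p) C = L)
    (Λ Λc : AddSubgroup (Fin n → ℝ))
    (hΛ : Λ = AddSubgroup.map (scaledLatticeHom p n B)
      (C.toAddSubgroup.comap (intCastHom p n)))
    (hΛc : Λc = AddSubgroup.map (scaledLatticeHom p n B)
      ((⊥ : AddSubgroup (Fin n → ZMod p)).comap (intCastHom p n))) :
    Λc ≤ Λ ∧ Nat.card (Λ ⧸ Λc.addSubgroupOf Λ) = p ^ L :=
  constructionA_index_general p n L hp B hB C hC Λ Λc hΛ hΛc
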